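/- Let L_n be the set of labeled rooted plane trees on n+1 vertices with root labeled 0 and leftmost child of the root labeled 1, and let L'_n ⊆ L_n consist of those trees where the vertex labeled 2 lies in the subtree rooted at the vertex labeled 1. Then for n ≥ 2, |L'_n| = |L_n|/2 = (1/2)(n-1)!·C_n. -/

import Mathlib

/-- A labeled rooted plane tree: a root label together with a linearly ordered list of
subtrees. -/
inductive PTree : Type where
  | node : ℕ → List PTree → PTree

/-- The label of the root of the tree. -/
def PTree.label : PTree → ℕ
  | .node a _ => a

/-- The ordered list of children of the root. -/
def PTree.children : PTree → List PTree
  | .node _ ts => ts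

mutual
/-- The list of all labels occurring in the tree. -/
def PTree.labels : PTree → List ℕ
  | .node a ts => a :: labelsList ts
/-- The list of all labels occurring in a forest. -/
def labelsList : List PTree → List ℕ
  | [] => []
  | t :: ts => t.labels ++ labelsList ts
end

/-- `T` is a member of `Lₙ`: a labeled rooted plane tree with `n+1` vertices labeled
bijectively by `{0,…,n}`, whose root is labeled `0` and whose leftmost root-child is
labeled `1`. -/
def InL (n : ℕ) (T : PTree) : Prop :=
  T.labels.Nodup ∧ (∀ k : ℕ, k ∈ T.labels ↔ k ≤ n) ∧ T.label = 0 ∧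
    ∃ t ts, T = .node 0 (t :: ts) ∧ t.label = 1

/-- `T` is a member of `L'ₙ ⊆ Lₙ`: additionally, the vertex labeled `2` lies in the
subtree rooted at the vertex labeled `1` (the leftmost child of the root). -/
def InL' (n : ℕ) (T : PTree) : Prop :=
  InL n T ∧ ∃ t ts, T = .node 0 (t :: ts) ∧ 2 ∈ t.labels

/-!
Swapping the children of vertex `1` with the remaining children of the root is an involution
of `Lₙ` that preserves the label set; since `2` lies either below `1` or below another child of
the root, it exchanges `L'ₙ` with its complement, so `|L'ₙ| = |Lₙ|/2`.

A tree of `Lₙ` is determined by its root forest, and the first-child/next-sibling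
correspondence identifies forests with pairs (binary tree with `n` nodes, preorder label word
of length `n`). Here the word is `1` followed by a permutation of `2, …, n`, whence
`|Lₙ| = (n-1)!·Cₙ`.
-/

theorem List.mem_right_iff_not_mem_left {α : Type*} {l₁ l₂ : List α} {x : α}
    (hnd : (l₁ ++ l₂).Nodup) (hx : x ∈ l₁ ++ l₂) : x ∈ l₂ ↔ x ∉ l₁ := by
  have hdisj := List.disjoint_of_nodup_append hnd
  rw [List.mem_append] at hx
  exact ⟨fun h₂ h₁ => hdisj h₁ h₂, hx.resolve_left⟩

theorem Set.two_mul_ncard_eq_of_involutive {α : Type*} {f : α → α} {s t : Set α}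
    (hf : Function.Involutive f) (hts : t ⊆ s) (hmaps : Set.MapsTo f s s)
    (hswap : ∀ x ∈ s, f x ∈ t ↔ x ∉ t) : 2 * t.ncard = s.ncard := by
  have himage : f '' t = s \ t := by
    ext x
    constructor
    · rintro ⟨y, hy, rfl⟩
      exact ⟨hmaps (hts hy), fun h => (hswap y (hts hy)).mp h hy⟩
    · rintro ⟨hxs, hxt⟩
      exact ⟨f x, (hswap x hxs).mpr hxt, hf x⟩
  have hencard : s.encard = t.encard + t.encard := by
    rw [← Set.encard_sdiff_add_encard_of_subset hts, ← himage, hf.injective.encard_image]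
  rw [Set.ncard_def, Set.ncard_def, hencard, ← two_mul, ENat.toNat_mul]
  rfl

theorem List.nodup_and_mem_iff_perm_range {l : List ℕ} {n : ℕ} :
    (l.Nodup ∧ ∀ k, k ∈ l ↔ k ≤ n) ↔ l.Perm (List.range (n + 1)) := by
  constructor
  · rintro ⟨hnd, hmem⟩
    exact (List.perm_ext_iff_of_nodup hnd List.nodup_range).mpr fun k => by simp [hmem]
  · intro hp
    exact ⟨hp.nodup_iff.mpr List.nodup_range, fun k => by simp [hp.mem_iff]⟩

theorem List.range_succ_eq_zero_cons_one_cons_range' {n : ℕ} (hn : 1 ≤ n) :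
    List.range (n + 1) = 0 :: 1 :: List.range' 2 (n - 1) := by
  obtain ⟨m, rfl⟩ := Nat.exists_eq_add_of_le' hn
  simp [List.range_eq_range', List.range'_succ]

/-- First-child/next-sibling encoding of a forest as a binary tree. -/
def forestShape : List PTree → BinaryTree Unit
  | [] => .nil
  | .node _ cs :: ts => .node () (forestShape cs) (forestShape ts)

theorem numNodes_forestShape (F : List PTree) :
    (forestShape F).numNodes = (labelsList F).length := by
  induction F using forestShape.induct with
  | case1 => simp [forestShape, labelsList, BinaryTree.numNodes]
  | case2 a cs ts ihc iht =>
    simp [forestShape, labelsList, PTree.labels, BinaryTree.numNodes, ihc, iht]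

theorem eq_of_forestShape_eq_of_labelsList_eq {F G : List PTree}
    (hshape : forestShape F = forestShape G) (hlabels : labelsList F = labelsList G) :
    F = G := by
  induction F using forestShape.induct generalizing G with
  | case1 => cases G with
    | nil => rfl
    | cons t _ => cases t; simp [forestShape] at hshape
  | case2 a cs ts ihc iht =>
    obtain _ | ⟨⟨b, cs'⟩, ts'⟩ := G
    · simp [forestShape] at hshape
    simp only [forestShape, BinaryTree.node.injEq, true_and] at hshape
    simp only [labelsList, PTree.labels, List.cons_append, List.cons.injEq] at hlabels
    have hlen : (labelsList cs).length = (labelsList cs').length := by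
      rw [← numNodes_forestShape, ← numNodes_forestShape, hshape.1]
    obtain ⟨hc, ht⟩ := List.append_inj hlabels.2 hlen
    rw [hlabels.1, ihc hshape.1 hc, iht hshape.2 ht]

theorem exists_forestShape_eq_labelsList_eq (b : BinaryTree Unit) (ls : List ℕ)
    (h : b.numNodes = ls.length) : ∃ F, forestShape F = b ∧ labelsList F = ls := by
  induction b generalizing ls with
  | nil =>
    refine ⟨[], by simp [forestShape], ?_⟩
    simp [labelsList, List.eq_nil_of_length_eq_zero h.symm]
  | node _ L R ihL ihR =>
    obtain _ | ⟨x, ls⟩ := ls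
    · simp [BinaryTree.numNodes] at h
    simp only [BinaryTree.numNodes, List.length_cons] at h
    obtain ⟨FL, hFL, hlL⟩ := ihL (ls.take L.numNodes) (by simp; omega)
    obtain ⟨FR, hFR, hlR⟩ := ihR (ls.drop L.numNodes) (by simp; omega)
    refine ⟨.node x FL :: FR, by rw [forestShape, hFL, hFR], ?_⟩
    simp [labelsList, PTree.labels, hlL, hlR]

theorem inL_iff_perm {n : ℕ} {T : PTree} :
    InL n T ↔ T.labels.Perm (List.range (n + 1)) ∧
      ∃ t ts, T = .node 0 (t :: ts) ∧ t.label = 1 := by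
  constructor
  · rintro ⟨hnd, hmem, -, hT⟩
    exact ⟨List.nodup_and_mem_iff_perm_range.mp ⟨hnd, hmem⟩, hT⟩
  · rintro ⟨hp, t, ts, rfl, ht⟩
    obtain ⟨hnd, hmem⟩ := List.nodup_and_mem_iff_perm_range.mpr hp
    exact ⟨hnd, hmem, rfl, t, ts, rfl, ht⟩

theorem inL_iff {n : ℕ} (hn : 1 ≤ n) {T : PTree} :
    InL n T ↔ ∃ F ls, T = .node 0 F ∧ labelsList F = 1 :: ls ∧
      ls.Perm (List.range' 2 (n - 1)) := by
  rw [inL_iff_perm, List.range_succ_eq_zero_cons_one_cons_range' hn]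
  constructor
  · rintro ⟨hp, ⟨b, cs⟩, ts, rfl, hb⟩
    obtain rfl : b = 1 := hb
    refine ⟨_, labelsList cs ++ labelsList ts, rfl, by simp [labelsList, PTree.labels], ?_⟩
    simpa [PTree.labels, labelsList] using hp
  · rintro ⟨F, ls, rfl, hF, hp⟩
    obtain _ | ⟨⟨b, cs⟩, ts⟩ := F
    · simp [labelsList] at hF
    simp only [labelsList, PTree.labels, List.cons_append, List.cons.injEq] at hF
    obtain ⟨rfl, hF⟩ := hF
    refine ⟨?_, _, ts, rfl, rfl⟩
    simp [PTree.labels, labelsList, hF, hp]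

/-- On `Lₙ` the preorder label list of the root forest starts with the forced label `1`, so
dropping it loses nothing. -/
def encode (T : PTree) : List ℕ × BinaryTree Unit :=
  ((labelsList T.children).tail, forestShape T.children)

theorem encode_injOn {n : ℕ} (hn : 1 ≤ n) : Set.InjOn encode {T | InL n T} := by
  rintro _ h₁ _ h₂ heq
  obtain ⟨F, ls, rfl, hF, -⟩ := (inL_iff hn).mp h₁
  obtain ⟨G, ls', rfl, hG, -⟩ := (inL_iff hn).mp h₂
  simp only [encode, PTree.children, hF, hG, List.tail_cons, Prod.mk.injEq] at heq
  rw [eq_of_forestShape_eq_of_labelsList_eq heq.2 (by rw [hF, hG, heq.1])]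

theorem encode_image {n : ℕ} (hn : 1 ≤ n) :
    encode '' {T | InL n T} = {p | p.1.Perm (List.range' 2 (n - 1)) ∧ p.2.numNodes = n} := by
  ext ⟨ls, b⟩
  simp only [Set.mem_image, Set.mem_ofPred_eq, inL_iff hn]
  constructor
  · rintro ⟨_, ⟨F, ls', rfl, hF, hp⟩, heq⟩
    simp only [encode, PTree.children, hF, List.tail_cons, Prod.mk.injEq] at heq
    obtain ⟨rfl, rfl⟩ := heq
    refine ⟨hp, ?_⟩
    rw [numNodes_forestShape, hF, List.length_cons, hp.length_eq, List.length_range']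
    omega
  · rintro ⟨hp, hb⟩
    obtain ⟨F, hshape, hF⟩ := exists_forestShape_eq_labelsList_eq b (1 :: ls) (by
      rw [List.length_cons, hp.length_eq, List.length_range']; omega)
    exact ⟨_, ⟨F, ls, rfl, hF, hp⟩, by simp [encode, PTree.children, hF, hshape]⟩

theorem ncard_setOf_inL {n : ℕ} (hn : 1 ≤ n) :
    {T | InL n T}.ncard = (n - 1).factorial * catalan n := by
  have hprod : {p : List ℕ × BinaryTree Unit | p.1.Perm (List.range' 2 (n - 1)) ∧
      p.2.numNodes = n} =
      ↑((List.range' 2 (n - 1)).permutations.toFinset ×ˢ BinaryTree.treesOfNumNodesEq n) := by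
    ext
    simp [List.mem_permutations]
  rw [← (encode_injOn hn).ncard_image, encode_image hn, hprod,
    Set.ncard_coe_finset, Finset.card_product,
    List.toFinset_card_of_nodup (List.nodup_permutations _ List.nodup_range'),
    List.length_permutations, List.length_range', BinaryTree.treesOfNumNodesEq_card_eq_catalan]

def swapChildren : PTree → PTree
  | .node a (.node b cs :: ts) => .node a (.node b ts :: cs)
  | T => T

theorem swapChildren_involutive : Function.Involutive swapChildren
  | .node _ (.node _ _ :: _) => rfl
  | .node _ [] => rfl

theorem InL.swapChildren {n : ℕ} {T : PTree} (h : InL n T) : InL n (swapChildren T) := by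
  rw [inL_iff_perm] at h ⊢
  obtain ⟨hp, ⟨b, cs⟩, ts, rfl, hb⟩ := h
  refine ⟨List.Perm.trans ?_ hp, _, cs, rfl, hb⟩
  simpa [_root_.swapChildren, PTree.labels, labelsList] using List.perm_append_comm

theorem inL'_node_iff {n : ℕ} {t : PTree} {ts : List PTree} (h : InL n (.node 0 (t :: ts))) :
    InL' n (.node 0 (t :: ts)) ↔ 2 ∈ t.labels := by
  simp [InL', h]

theorem inL'_swapChildren_iff {n : ℕ} (hn : 2 ≤ n) {T : PTree} (h : InL n T) :
    InL' n (swapChildren T) ↔ ¬ InL' n T := by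
  obtain ⟨⟨b, cs⟩, ts, rfl, hb⟩ := h.2.2.2
  obtain rfl : b = 1 := hb
  rw [swapChildren, inL'_node_iff h.swapChildren, inL'_node_iff h]
  obtain ⟨hnd, hmem, -⟩ := h
  simp only [PTree.labels, labelsList, List.cons_append, List.nodup_cons, List.mem_cons] at hnd hmem
  have h₂ : 2 ∈ labelsList cs ++ labelsList ts := by simpa using (hmem 2).mpr hn
  simpa [PTree.labels] using List.mem_right_iff_not_mem_left hnd.2.2 h₂

/-- `|L'ₙ| = |Lₙ|/2 = (1/2)(n-1)!·Cₙ` for `n ≥ 2`. -/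
theorem card_L'_half (n : ℕ) (hn : 2 ≤ n) :
    2 * Set.ncard {T : PTree | InL' n T} = Set.ncard {T : PTree | InL n T} ∧
    2 * Set.ncard {T : PTree | InL' n T} = Nat.factorial (n - 1) * catalan n := by
  have hhalf : 2 * {T | InL' n T}.ncard = {T | InL n T}.ncard :=
    Set.two_mul_ncard_eq_of_involutive swapChildren_involutive (fun _ hT => hT.1)
      (fun _ hT => hT.swapChildren) (fun _ hT => inL'_swapChildren_iff hn hT)
  exact ⟨hhalf, hhalf.trans (ncard_setOf_inL (by omega))⟩
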